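/- arXiv:1602.03111 — 2 statements merged into one kernel-verified Lean document; each statement's English description precedes it below -/
import Mathlib

section
/- In the Set Cover reduction graph with seed set S = {s}, for every k with 1 ≤ k ≤ m the following equivalence holds: there exists an index set I ⊆ {1, …, m} with |I| = k and ⋃_{i∈I} C_i = X if and only if there exists a boost set B ⊆ V \ {s} with |B| = k and σ_{{s}}(B) ≥ 1 + k + (m − k)/2 + n. (This is the correctness of the reduction establishing the NP-hardness of the k-boosting problem.) -/
open Finset
open scoped Classical

noncomputable section

variable {V : Type*}

/-- The probability weight of the live-edge configuration `L ⊆ E`: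
each edge `e ∈ E` is independently live with probability `p e`. -/
def edgeWeight [DecidableEq V] (E : Finset (V × V)) (p : V × V → ℝ)
    (L : Finset (V × V)) : ℝ :=
  (∏ e ∈ L, p e) * ∏ e ∈ E \ L, (1 - p e)

/-- `v` is activated in configuration `L`: it is reachable from some seed in `S`
through live (directed) edges. -/
def Reaches (L : Finset (V × V)) (S : Finset V) (v : V) : Prop :=
  ∃ s ∈ S, Relation.ReflTransGen (fun a b => (a, b) ∈ L) s v

/-- Activation probability of node `v` under the live-edge model with edge set `E`,
edge probabilities `p`, and seed set `S`. -/
def ap [Fintype V] [DecidableEq V] (E : Finset (V × V)) (p : V × V → ℝ)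
    (S : Finset V) (v : V) : ℝ :=
  ∑ L ∈ E.powerset, edgeWeight E p L * (if Reaches L S v then 1 else 0)

/-- Expected number of activated nodes lying in the node set `W`. -/
def spreadOn [Fintype V] [DecidableEq V] (E : Finset (V × V)) (p : V × V → ℝ)
    (S W : Finset V) : ℝ :=
  ∑ L ∈ E.powerset, edgeWeight E p L * ((W.filter (fun v => Reaches L S v)).card : ℝ)

/-- The influence spread `σ_S`: expected total number of activated nodes. -/
def spread [Fintype V] [DecidableEq V] (E : Finset (V × V)) (p : V × V → ℝ)
    (S : Finset V) : ℝ :=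
  spreadOn E p S Finset.univ

/-- Boosted edge probabilities: edges pointing into a boosted node use `p'`. -/
def pB (p p' : V × V → ℝ) (B : Finset V) : V × V → ℝ :=
  fun e => if e.2 ∈ B then p' e else p e

/-- The bidirected edge set of an undirected graph: each undirected edge is
replaced by the two directed edges. -/
def treeEdges [Fintype V] [DecidableEq V] (T : SimpleGraph V) [DecidableRel T.Adj] :
    Finset (V × V) :=
  Finset.univ.filter (fun e => T.Adj e.1 e.2)

/-- `apSub E p S v u` is `ap_B(v\u)`: the activation probability of `v` in the
subtree `G_{v\u}` obtained by removing the directed edges `(u,v)` and `(v,u)`. -/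
def apSub [Fintype V] [DecidableEq V] (E : Finset (V × V)) (p : V × V → ℝ)
    (S : Finset V) (v u : V) : ℝ :=
  ap (E \ {(u, v), (v, u)}) p S v

/-- The set of nodes of the connected component containing `v` w.r.t. edge set `E`. -/
def comp [Fintype V] [DecidableEq V] (E : Finset (V × V)) (v : V) : Finset V :=
  Finset.univ.filter (fun w => Relation.ReflTransGen (fun a b => (a, b) ∈ E) v w)

/-- `gain E p S v u` is `g_B(v\u)`: in the subtree `G_{v\u}`, the expected number of
activated nodes when the seed set is `(S ∩ V(G_{v\u})) ∪ {v}` minus the expected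
number when the seed set is `S ∩ V(G_{v\u})`. -/
def gain [Fintype V] [DecidableEq V] (E : Finset (V × V)) (p : V × V → ℝ)
    (S : Finset V) (v u : V) : ℝ :=
  spreadOn (E \ {(u, v), (v, u)}) p (insert v (S ∩ comp (E \ {(u, v), (v, u)}) v))
      (comp (E \ {(u, v), (v, u)}) v)
    - spreadOn (E \ {(u, v), (v, u)}) p (S ∩ comp (E \ {(u, v), (v, u)}) v)
      (comp (E \ {(u, v), (v, u)}) v)


/-- Node type of the Set Cover reduction graph: the seed `s`, the set-nodes
`c_1, …, c_m`, and the element-nodes `x_1, …, x_n`. -/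
abbrev SCNode (m n : ℕ) := Unit ⊕ (Fin m ⊕ Fin n)

def sNode {m n : ℕ} : SCNode m n := Sum.inl ()

def cNode {m n : ℕ} (i : Fin m) : SCNode m n := Sum.inr (Sum.inl i)

def xNode {m n : ℕ} (j : Fin n) : SCNode m n := Sum.inr (Sum.inr j)

/-- Edges of the Set Cover reduction graph: `(s, c_i)` for every `i`, and
`(c_i, x_j)` whenever `e_j ∈ C_i`. -/
def scEdges (m n : ℕ) (C : Fin m → Finset (Fin n)) :
    Finset (SCNode m n × SCNode m n) :=
  (Finset.univ.image fun i : Fin m => (sNode, cNode i)) ∪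
    (((Finset.univ : Finset (Fin m × Fin n)).filter fun ij => ij.2 ∈ C ij.1).image
      fun ij => (cNode ij.1, xNode ij.2))

/-- Influence probabilities: `1/2` on edges into the `c_i`'s, `1` on edges
into the `x_j`'s. -/
def scP (m n : ℕ) : SCNode m n × SCNode m n → ℝ :=
  fun e => match e.2 with
  | Sum.inr (Sum.inl _) => 1 / 2
  | _ => 1

/-- Boosted influence probabilities: `1` on every edge. -/
def scP' (m n : ℕ) : SCNode m n × SCNode m n → ℝ := fun _ => 1

/-- In-degree `d_j` of the element node `x_j`: number of sets containing `e_j`. -/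
def scDeg {m n : ℕ} (C : Fin m → Finset (Fin n)) (j : Fin n) : ℕ :=
  (Finset.univ.filter fun i : Fin m => j ∈ C i).card

/-!
With seed `s`, every set-node `c_i` is activated with probability `1` if boosted and `1/2`
otherwise, so `σ(B) = 1 + m/2 + |I_B|/2 + ∑_j P(x_j active)`, where `I_B` is the set of indices of
boosted set-nodes. Since all probabilities lie in `(0, 1]`, a node is activated with probability
`1` exactly when it is reached through edges of probability `1`; for `x_j` this means that some
boosted `c_i` has `e_j ∈ C_i`. Hence `σ(B) ≤ 1 + m/2 + |B|/2 + n = 1 + k + (m - k)/2 + n`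
for `|B| = k`, with equality exactly when `I_B` is a cover with `|I_B| = k`.
-/

section LiveEdge

variable {E L : Finset (V × V)} {p : V × V → ℝ} {S : Finset V} {v : V}

lemma Reaches.mono {L' : Finset (V × V)} (h : Reaches L S v) (hL : L ⊆ L') :
    Reaches L' S v :=
  let ⟨s, hs, hsv⟩ := h
  ⟨s, hs, Relation.ReflTransGen.mono (fun _ _ hab => hL hab) _ _ hsv⟩

variable [DecidableEq V]

lemma sum_edgeWeight_powerset (E : Finset (V × V)) (p : V × V → ℝ) :
    ∑ L ∈ E.powerset, edgeWeight E p L = 1 := by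
  have h := Finset.prod_add p (fun e => 1 - p e) E
  simp only [add_sub_cancel, Finset.prod_const_one] at h
  exact h.symm

lemma edgeWeight_nonneg (h0 : ∀ e ∈ E, 0 ≤ p e) (h1 : ∀ e ∈ E, p e ≤ 1) (hL : L ⊆ E) :
    0 ≤ edgeWeight E p L :=
  mul_nonneg (Finset.prod_nonneg fun e he => h0 e (hL he))
    (Finset.prod_nonneg fun e he => sub_nonneg.mpr (h1 e (Finset.mem_sdiff.mp he).1))

lemma edgeWeight_pos (hL : ∀ e ∈ L, 0 < p e) (hE : ∀ e ∈ E \ L, p e < 1) :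
    0 < edgeWeight E p L :=
  mul_pos (Finset.prod_pos hL) (Finset.prod_pos fun e he => sub_pos.mpr (hE e he))

lemma mem_of_edgeWeight_ne_zero {e : V × V} (he : e ∈ E) (hp : p e = 1)
    (hw : edgeWeight E p L ≠ 0) : e ∈ L := by
  by_contra heL
  exact hw (mul_eq_zero_of_right _
    (Finset.prod_eq_zero (Finset.mem_sdiff.mpr ⟨he, heL⟩) (by rw [hp, sub_self])))

lemma sum_edgeWeight_ite_mem {e : V × V} (he : e ∈ E) :
    ∑ L ∈ E.powerset, edgeWeight E p L * (if e ∈ L then 1 else 0) = p e := by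
  rw [← Finset.insert_erase he, Finset.sum_powerset_insert (Finset.notMem_erase e E)]
  have hnot : ∀ t ∈ (E.erase e).powerset, e ∉ t :=
    fun t ht het => Finset.notMem_erase e E (Finset.mem_powerset.mp ht het)
  have hsdiff : ∀ t, insert e (E.erase e) \ insert e t = E.erase e \ t := fun t => by
    ext a
    simp only [Finset.mem_sdiff, Finset.mem_insert, Finset.mem_erase]
    tauto
  rw [Finset.sum_eq_zero fun t ht => by rw [if_neg (hnot t ht), mul_zero], zero_add,
    Finset.sum_congr rfl fun t ht => by
      rw [if_pos (Finset.mem_insert_self e t), mul_one, edgeWeight,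
        Finset.prod_insert (hnot t ht), hsdiff, mul_assoc],
    ← Finset.mul_sum]
  exact (congrArg _ (sum_edgeWeight_powerset _ p)).trans (mul_one _)

variable [Fintype V]

lemma spread_eq_sum_ap (E : Finset (V × V)) (p : V × V → ℝ) (S : Finset V) :
    spread E p S = ∑ v, ap E p S v := by
  simp_rw [spread, spreadOn, ap, ← Finset.sum_boole, Finset.mul_sum]
  exact Finset.sum_comm

lemma ap_eq_of_reaches_iff_mem {e : V × V} (he : e ∈ E)
    (h : ∀ L ⊆ E, Reaches L S v ↔ e ∈ L) : ap E p S v = p e :=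
  (Finset.sum_congr rfl fun L hL => by
    rw [if_congr (h L (Finset.mem_powerset.mp hL)) rfl rfl]).trans
    (sum_edgeWeight_ite_mem he)

lemma ap_le_one (h0 : ∀ e ∈ E, 0 ≤ p e) (h1 : ∀ e ∈ E, p e ≤ 1) : ap E p S v ≤ 1 := by
  rw [← sum_edgeWeight_powerset E p]
  refine Finset.sum_le_sum fun L hL => ?_
  have hw := edgeWeight_nonneg h0 h1 (Finset.mem_powerset.mp hL)
  split_ifs <;> linarith

def certainEdges (E : Finset (V × V)) (p : V × V → ℝ) : Finset (V × V) :=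
  E.filter fun e => p e = 1

/-- Every configuration of positive probability contains the certain edges. -/
lemma ap_eq_one_of_reaches_certainEdges (h : Reaches (certainEdges E p) S v) :
    ap E p S v = 1 := by
  rw [← sum_edgeWeight_powerset E p]
  refine Finset.sum_congr rfl fun L _ => ?_
  by_cases hw : edgeWeight E p L = 0
  · rw [hw, zero_mul]
  · have hcert : certainEdges E p ⊆ L := fun e he =>
      mem_of_edgeWeight_ne_zero (Finset.mem_filter.mp he).1 (Finset.mem_filter.mp he).2 hw
    rw [if_pos (h.mono hcert), mul_one]

/-- The configuration of certain edges has positive probability, and misses `v`. -/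
lemma ap_lt_one_of_not_reaches_certainEdges (h0 : ∀ e ∈ E, 0 < p e)
    (h1 : ∀ e ∈ E, p e ≤ 1) (h : ¬ Reaches (certainEdges E p) S v) : ap E p S v < 1 := by
  have hsub : certainEdges E p ⊆ E := Finset.filter_subset _ _
  have hpos : 0 < edgeWeight E p (certainEdges E p) := by
    refine edgeWeight_pos (fun e he => h0 e (hsub he)) fun e he => ?_
    obtain ⟨heE, hne⟩ := Finset.mem_sdiff.mp he
    exact lt_of_le_of_ne (h1 e heE) fun hpe => hne (Finset.mem_filter.mpr ⟨heE, hpe⟩)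
  rw [← sum_edgeWeight_powerset E p]
  refine Finset.sum_lt_sum (fun L hL => ?_)
    ⟨_, Finset.mem_powerset.mpr hsub, by rwa [if_neg h, mul_zero]⟩
  have hw := edgeWeight_nonneg (fun e he => (h0 e he).le) h1 (Finset.mem_powerset.mp hL)
  split_ifs <;> linarith

lemma ap_eq_one_iff (h0 : ∀ e ∈ E, 0 < p e) (h1 : ∀ e ∈ E, p e ≤ 1) :
    ap E p S v = 1 ↔ Reaches (certainEdges E p) S v :=
  ⟨fun h => by_contra fun hr => (ap_lt_one_of_not_reaches_certainEdges h0 h1 hr).ne h,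
    ap_eq_one_of_reaches_certainEdges⟩

end LiveEdge

section Reduction

variable {m n : ℕ} {C : Fin m → Finset (Fin n)} {B : Finset (SCNode m n)}

lemma cNode_injective : Function.Injective (cNode : Fin m → SCNode m n) :=
  fun _ _ h => by simpa [cNode] using h

lemma mem_scEdges {a b : SCNode m n} :
    (a, b) ∈ scEdges m n C ↔
      (∃ i, a = sNode ∧ b = cNode i) ∨ ∃ i j, j ∈ C i ∧ a = cNode i ∧ b = xNode j := by
  simp only [scEdges, Finset.mem_union, Finset.mem_image, Finset.mem_filter, Finset.mem_univ,
    true_and, Prod.mk.injEq, Prod.exists, eq_comm]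

lemma sNode_cNode_mem_scEdges (i : Fin m) : (sNode, cNode i) ∈ scEdges m n C :=
  mem_scEdges.mpr (Or.inl ⟨i, rfl, rfl⟩)

lemma cNode_xNode_mem_scEdges {i : Fin m} {j : Fin n} (h : j ∈ C i) :
    (cNode i, xNode j) ∈ scEdges m n C :=
  mem_scEdges.mpr (Or.inr ⟨i, j, h, rfl, rfl⟩)

lemma pB_sNode_cNode (i : Fin m) :
    pB (scP m n) (scP' m n) B (sNode, cNode i) = if cNode i ∈ B then 1 else 1 / 2 := by
  by_cases h : cNode i ∈ B <;> simp only [pB, h, if_true, if_false] <;> rfl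

lemma pB_cNode_xNode (i : Fin m) (j : Fin n) :
    pB (scP m n) (scP' m n) B (cNode i, xNode j) = 1 := by
  simp only [pB]
  split_ifs <;> rfl

lemma pB_mem_Ioc {e : SCNode m n × SCNode m n} (he : e ∈ scEdges m n C) :
    pB (scP m n) (scP' m n) B e ∈ Set.Ioc 0 1 := by
  obtain ⟨a, b⟩ := e
  rcases mem_scEdges.mp he with ⟨i, rfl, rfl⟩ | ⟨i, j, -, rfl, rfl⟩
  · rw [pB_sNode_cNode]
    split_ifs <;> norm_num
  · rw [pB_cNode_xNode]
    norm_num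

/-- The only edge into `c_i` comes from `s`. -/
lemma sNode_cNode_mem_of_reflTransGen {L : Finset (SCNode m n × SCNode m n)}
    (hL : L ⊆ scEdges m n C) {i : Fin m}
    (h : Relation.ReflTransGen (fun a b => (a, b) ∈ L) sNode (cNode i)) :
    (sNode, cNode i) ∈ L := by
  rcases h.cases_tail with h | ⟨c, -, hc⟩
  · simp [sNode, cNode] at h
  · rcases mem_scEdges.mp (hL hc) with ⟨_, rfl, -⟩ | ⟨_, _, -, -, hx⟩
    · exact hc
    · simp [cNode, xNode] at hx

lemma reaches_cNode_iff {L : Finset (SCNode m n × SCNode m n)} (hL : L ⊆ scEdges m n C)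
    {i : Fin m} : Reaches L {sNode} (cNode i) ↔ (sNode, cNode i) ∈ L := by
  refine ⟨fun ⟨s, hs, h⟩ => ?_, fun h => ⟨sNode, Finset.mem_singleton_self _, .single h⟩⟩
  rw [Finset.mem_singleton.mp hs] at h
  exact sNode_cNode_mem_of_reflTransGen hL h

lemma reaches_xNode_iff {L : Finset (SCNode m n × SCNode m n)} (hL : L ⊆ scEdges m n C)
    {j : Fin n} :
    Reaches L {sNode} (xNode j) ↔
      ∃ i, j ∈ C i ∧ (sNode, cNode i) ∈ L ∧ (cNode i, xNode j) ∈ L := by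
  refine ⟨fun ⟨s, hs, h⟩ => ?_, fun ⟨i, _, hs, hx⟩ => ⟨sNode, Finset.mem_singleton_self _,
    (Relation.ReflTransGen.single hs).tail hx⟩⟩
  rw [Finset.mem_singleton.mp hs] at h
  rcases h.cases_tail with h | ⟨c, hc, hcx⟩
  · simp [sNode, xNode] at h
  rcases mem_scEdges.mp (hL hcx) with ⟨_, _, h⟩ | ⟨i, j', hij, rfl, h⟩
  · simp [cNode, xNode] at h
  obtain rfl : j' = j := by simpa [xNode] using h.symm
  exact ⟨i, hij, sNode_cNode_mem_of_reflTransGen hL hc, h ▸ hcx⟩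

lemma ap_sNode :
    ap (scEdges m n C) (pB (scP m n) (scP' m n) B) {sNode} sNode = 1 :=
  ap_eq_one_of_reaches_certainEdges ⟨sNode, Finset.mem_singleton_self _, .refl⟩

lemma ap_cNode (i : Fin m) :
    ap (scEdges m n C) (pB (scP m n) (scP' m n) B) {sNode} (cNode i) =
      if cNode i ∈ B then 1 else 1 / 2 := by
  rw [ap_eq_of_reaches_iff_mem (sNode_cNode_mem_scEdges i) fun L hL => reaches_cNode_iff hL,
    pB_sNode_cNode]

lemma ap_xNode_le_one (j : Fin n) :
    ap (scEdges m n C) (pB (scP m n) (scP' m n) B) {sNode} (xNode j) ≤ 1 :=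
  ap_le_one (fun _ he => (pB_mem_Ioc he).1.le) fun _ he => (pB_mem_Ioc he).2

lemma ap_xNode_eq_one_iff (j : Fin n) :
    ap (scEdges m n C) (pB (scP m n) (scP' m n) B) {sNode} (xNode j) = 1 ↔
      ∃ i, j ∈ C i ∧ cNode i ∈ B := by
  rw [ap_eq_one_iff (fun _ he => (pB_mem_Ioc he).1) fun _ he => (pB_mem_Ioc he).2,
    certainEdges, reaches_xNode_iff (Finset.filter_subset _ _)]
  simp only [Finset.mem_filter, pB_sNode_cNode, pB_cNode_xNode,
    sNode_cNode_mem_scEdges, true_and, and_true]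
  refine exists_congr fun i => and_congr_right fun hij => ?_
  simp [cNode_xNode_mem_scEdges hij]

def boostedIndices (B : Finset (SCNode m n)) : Finset (Fin m) :=
  Finset.univ.filter fun i => cNode i ∈ B

lemma boostedIndices_map (I : Finset (Fin m)) :
    boostedIndices (I.map ⟨cNode, cNode_injective⟩ : Finset (SCNode m n)) = I := by
  ext i
  simp [boostedIndices]

lemma card_boostedIndices_le (B : Finset (SCNode m n)) : (boostedIndices B).card ≤ B.card :=
  Finset.card_le_card_of_injOn cNode (fun _ hi => (Finset.mem_filter.mp hi).2)
    cNode_injective.injOn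

lemma sum_scNode {M : Type*} [AddCommMonoid M] (f : SCNode m n → M) :
    ∑ v, f v = f sNode + ∑ i, f (cNode i) + ∑ j, f (xNode j) := by
  rw [Fintype.sum_sum_type, Fintype.sum_sum_type, Fintype.sum_unique, add_assoc]
  rfl

lemma spread_scEdges :
    spread (scEdges m n C) (pB (scP m n) (scP' m n) B) {sNode} =
      1 + (m : ℝ) / 2 + ((boostedIndices B).card : ℝ) / 2 +
        ∑ j, ap (scEdges m n C) (pB (scP m n) (scP' m n) B) {sNode} (xNode j) := by
  have hc : ∀ i, ap (scEdges m n C) (pB (scP m n) (scP' m n) B) {sNode} (cNode i) =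
      1 / 2 + if i ∈ boostedIndices B then 1 / 2 else 0 := fun i => by
    simp only [ap_cNode, boostedIndices, Finset.mem_filter, Finset.mem_univ, true_and]
    split_ifs <;> norm_num
  rw [spread_eq_sum_ap, sum_scNode, ap_sNode, Finset.sum_congr rfl fun i _ => hc i,
    Finset.sum_add_distrib, Finset.sum_ite_mem, Finset.univ_inter]
  simp only [Finset.sum_const, Finset.card_univ, Fintype.card_fin, nsmul_eq_mul]
  ring

lemma sum_ap_xNode_le :
    ∑ j, ap (scEdges m n C) (pB (scP m n) (scP' m n) B) {sNode} (xNode j) ≤ n := by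
  simpa using Finset.sum_le_card_nsmul Finset.univ _ 1 fun j _ => ap_xNode_le_one (C := C) j

lemma sum_ap_xNode_eq_iff :
    ∑ j, ap (scEdges m n C) (pB (scP m n) (scP' m n) B) {sNode} (xNode j) = n ↔
      ∀ j, ∃ i ∈ boostedIndices B, j ∈ C i := by
  have h := Finset.sum_eq_sum_iff_of_le fun j (_ : j ∈ Finset.univ) =>
    ap_xNode_le_one (B := B) (C := C) j
  simp only [Finset.sum_const, Finset.card_univ, Fintype.card_fin, nsmul_eq_mul, mul_one,
    Finset.mem_univ, true_implies, ap_xNode_eq_one_iff] at h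
  simp only [h, boostedIndices, Finset.mem_filter, Finset.mem_univ, true_and]
  exact forall_congr' fun j => exists_congr fun i => and_comm

end Reduction

theorem setCover_reduction_correct_general (m n k : ℕ) (C : Fin m → Finset (Fin n)) :
    (∃ I : Finset (Fin m), I.card = k ∧ ∀ j : Fin n, ∃ i ∈ I, j ∈ C i) ↔
      (∃ B : Finset (SCNode m n), sNode ∉ B ∧ B.card = k ∧
        spread (scEdges m n C) (pB (scP m n) (scP' m n) B)
            ({sNode} : Finset (SCNode m n)) ≥
          1 + (k : ℝ) + ((m : ℝ) - k) / 2 + n) := by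
  constructor
  · rintro ⟨I, rfl, hcover⟩
    refine ⟨I.map ⟨cNode, cNode_injective⟩, by simp [sNode, cNode], Finset.card_map _, ?_⟩
    rw [spread_scEdges, sum_ap_xNode_eq_iff.mpr (by rwa [boostedIndices_map]),
      boostedIndices_map]
    linarith
  · rintro ⟨B, -, rfl, hσ⟩
    rw [spread_scEdges] at hσ
    have hcard : ((boostedIndices B).card : ℝ) ≤ B.card := by
      exact_mod_cast card_boostedIndices_le B
    have hsum := sum_ap_xNode_le (C := C) (B := B)
    refine ⟨boostedIndices B, ?_, sum_ap_xNode_eq_iff.mp (le_antisymm hsum (by linarith))⟩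
    exact_mod_cast le_antisymm hcard (by linarith)

/-- Correctness of the Set Cover reduction (NP-hardness of the `k`-boosting
problem): for `1 ≤ k ≤ m`, there is a set cover of size `k` iff there is a boost
set `B ⊆ V \ {s}` with `|B| = k` and `σ_{{s}}(B) ≥ 1 + k + (m − k)/2 + n`. -/
theorem setCover_reduction_correct (m n k : ℕ) (C : Fin m → Finset (Fin n))
    (hcov : ∀ j : Fin n, ∃ i : Fin m, j ∈ C i) (hk1 : 1 ≤ k) (hkm : k ≤ m) :
    (∃ I : Finset (Fin m), I.card = k ∧ ∀ j : Fin n, ∃ i ∈ I, j ∈ C i) ↔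
      (∃ B : Finset (SCNode m n), sNode ∉ B ∧ B.card = k ∧
        spread (scEdges m n C) (pB (scP m n) (scP' m n) B)
            ({sNode} : Finset (SCNode m n)) ≥
          1 + (k : ℝ) + ((m : ℝ) - k) / 2 + n) :=
  setCover_reduction_correct_general m n k C

end
end

section
/- Let G be a bidirected tree with seed set S and boost set B. For every non-seed node u, the activation probability of u satisfies ap_B(u) = 1 − ∏_{v ∈ N(u)} (1 − ap_B(v\u) · p^B_{vu}). -/
open Finset
open scoped Classical

noncomputable section

variable {V : Type*}

/-! Deleting `u` splits the tree into the subtrees `G_{v\u}`, `v ∈ N(u)`; their edges, together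
with the two edges between `u` and `v`, partition the edges of the tree into branches. A
non-seed `u` is activated iff for some neighbour `v` the edge `(v, u)` is live and `v` is
activated inside `G_{v\u}`. These events live on disjoint branches, so they are independent
under the product distribution of live edges, and the event for `v` has probability
`p^B_{vu} · ap_B(v\u)`. -/

open Relation

lemma ite_exists_eq_one_sub_prod {ι : Type*} (s : Finset ι) (P : ι → Prop)
    [Decidable (∃ i ∈ s, P i)] [DecidablePred P] :
    (if ∃ i ∈ s, P i then (1 : ℝ) else 0) = 1 - ∏ i ∈ s, (1 - if P i then 1 else 0) := by
  by_cases h : ∃ i ∈ s, P i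
  · obtain ⟨i, hi, hPi⟩ := h
    rw [if_pos ⟨i, hi, hPi⟩, prod_eq_zero hi (by simp [hPi]), sub_zero]
  · have hP : ∀ i ∈ s, ¬ P i := fun i hi hPi => h ⟨i, hi, hPi⟩
    rw [if_neg h, prod_eq_one fun i hi => by simp [hP i hi], sub_self]

def liveExpect [DecidableEq V] (E : Finset (V × V)) (q : V × V → ℝ)
    (f : Finset (V × V) → ℝ) : ℝ :=
  ∑ L ∈ E.powerset, edgeWeight E q L * f L

section LiveExpect

variable [DecidableEq V] {E A B : Finset (V × V)} (q : V × V → ℝ)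

lemma liveExpect_congr {f g : Finset (V × V) → ℝ} (h : ∀ L ⊆ E, f L = g L) :
    liveExpect E q f = liveExpect E q g :=
  sum_congr rfl fun L hL => by rw [h L (mem_powerset.mp hL)]

lemma sum_edgeWeight : ∑ L ∈ E.powerset, edgeWeight E q L = 1 := by
  simpa [edgeWeight] using (prod_add q (fun e => 1 - q e) E).symm

lemma liveExpect_const (c : ℝ) : liveExpect E q (fun _ => c) = c := by
  rw [liveExpect, ← sum_mul, sum_edgeWeight, one_mul]

lemma liveExpect_one_sub (f : Finset (V × V) → ℝ) :
    liveExpect E q (fun L => 1 - f L) = 1 - liveExpect E q f := by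
  simp only [liveExpect, mul_sub, sum_sub_distrib, mul_one, sum_edgeWeight]

lemma edgeWeight_union (h : Disjoint A B) {LA LB : Finset (V × V)} (hA : LA ⊆ A)
    (hB : LB ⊆ B) :
    edgeWeight (A ∪ B) q (LA ∪ LB) = edgeWeight A q LA * edgeWeight B q LB := by
  have hsdiff : (A ∪ B) \ (LA ∪ LB) = (A \ LA) ∪ (B \ LB) := by
    have := disjoint_left.mp h
    ext e
    grind
  rw [edgeWeight, edgeWeight, edgeWeight, hsdiff, prod_union (h.mono hA hB),
    prod_union (h.mono sdiff_subset sdiff_subset)]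
  ring

lemma liveExpect_union_mul (h : Disjoint A B) (f g : Finset (V × V) → ℝ) :
    liveExpect (A ∪ B) q (fun L => f (L ∩ A) * g (L ∩ B))
      = liveExpect A q f * liveExpect B q g := by
  rw [liveExpect, liveExpect, liveExpect, sum_mul_sum, ← sum_product']
  refine sum_bij' (fun L _ => (L ∩ A, L ∩ B)) (fun P _ => P.1 ∪ P.2) ?_ ?_ ?_ ?_ ?_
  · intro L _
    simp only [mem_product, mem_powerset]
    exact ⟨inter_subset_right, inter_subset_right⟩
  · intro P hP
    simp only [mem_product, mem_powerset] at hP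
    exact mem_powerset.mpr (union_subset_union hP.1 hP.2)
  · intro L hL
    rw [← inter_union_distrib_left, inter_eq_left.mpr (mem_powerset.mp hL)]
  · intro P hP
    simp only [mem_product, mem_powerset] at hP
    have := disjoint_left.mp h
    ext e <;> grind
  · intro L hL
    dsimp only
    nth_rw 1 [← inter_eq_left.mpr (mem_powerset.mp hL), inter_union_distrib_left]
    rw [edgeWeight_union q h inter_subset_right inter_subset_right]
    ring

lemma liveExpect_comp_inter (hA : A ⊆ E) (f : Finset (V × V) → ℝ) :
    liveExpect E q (fun L => f (L ∩ A)) = liveExpect A q f := by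
  have h := liveExpect_union_mul q (disjoint_sdiff (s := A) (t := E)) f (fun _ => 1)
  simp only [mul_one, liveExpect_const, union_sdiff_of_subset hA] at h
  exact h

lemma liveExpect_mul_of_disjoint (hA : A ⊆ E) (hB : B ⊆ E) (h : Disjoint A B)
    (f g : Finset (V × V) → ℝ) :
    liveExpect E q (fun L => f (L ∩ A) * g (L ∩ B))
      = liveExpect A q f * liveExpect B q g := by
  rw [← liveExpect_union_mul q h]
  convert liveExpect_comp_inter q (union_subset hA hB) _ using 3 with L
  rw [inter_assoc, inter_assoc, inter_eq_right.mpr subset_union_left,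
    inter_eq_right.mpr subset_union_right]

lemma liveExpect_prod_biUnion {ι : Type*} [DecidableEq ι] {s : Finset ι}
    {A : ι → Finset (V × V)} (hA : (s : Set ι).PairwiseDisjoint A)
    (f : ι → Finset (V × V) → ℝ) :
    liveExpect (s.biUnion A) q (fun L => ∏ i ∈ s, f i (L ∩ A i))
      = ∏ i ∈ s, liveExpect (A i) q (f i) := by
  induction s using Finset.induction_on with
  | empty => simpa using liveExpect_const (E := ∅) q 1
  | @insert a s ha ih =>
    have hdisj : Disjoint (A a) (s.biUnion A) :=
      (disjoint_biUnion_right _ _ _).mpr fun i hi =>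
        hA (mem_insert_self a s) (mem_insert_of_mem hi) (ne_of_mem_of_not_mem hi ha).symm
    rw [biUnion_insert, prod_insert ha,
      ← ih (hA.subset (by simp)), ← liveExpect_union_mul q hdisj]
    refine liveExpect_congr q fun L _ => ?_
    rw [prod_insert ha]
    congr 1
    refine prod_congr rfl fun i hi => ?_
    rw [inter_assoc, inter_eq_right.mpr (subset_biUnion_of_mem A hi)]

lemma liveExpect_singleton (e : V × V) :
    liveExpect {e} q (fun L => if e ∈ L then 1 else 0) = q e := by
  rw [liveExpect, ← insert_empty, powerset_insert]
  simp [edgeWeight]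

end LiveExpect

lemma exists_reflTransGen_avoiding_of_ne {α : Type*} {r : α → α → Prop} {a b : α}
    (h : ReflTransGen r a b) (hab : a ≠ b) :
    ∃ c, ReflTransGen (fun x y => r x y ∧ x ≠ b) a c ∧ r c b := by
  induction h using ReflTransGen.head_induction_on with
  | refl => exact absurd rfl hab
  | @head a c hac _ ih =>
    by_cases hc : c = b
    · exact ⟨a, .refl, hc ▸ hac⟩
    · obtain ⟨d, hcd, hdb⟩ := ih hc
      exact ⟨d, hcd.head ⟨hac, hab⟩, hdb⟩

/-- For a neighbour `v` of `u` in a tree, the nodes `w` with `InSubtree T u v w` are those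
of `G_{v\u}`. -/
def InSubtree (T : SimpleGraph V) (u v w : V) : Prop :=
  ReflTransGen (fun a b => T.Adj a b ∧ a ≠ u ∧ b ≠ u) v w

namespace InSubtree

variable {T : SimpleGraph V} {u v w a c : V}

lemma refl : InSubtree T u v v := ReflTransGen.refl

lemma tail (h : InSubtree T u v a) (hac : T.Adj a c) (ha : a ≠ u) (hc : c ≠ u) :
    InSubtree T u v c :=
  ReflTransGen.tail h ⟨hac, ha, hc⟩

lemma ne (hv : v ≠ u) (h : InSubtree T u v w) : w ≠ u := by
  rcases h.cases_tail with rfl | ⟨_, _, _, _, hw⟩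
  exacts [hv, hw]

lemma reachable_deleteEdges (h : InSubtree T u v w) (y : V) :
    (T.deleteEdges {s(u, y)}).Reachable v w := by
  induction h with
  | refl => rfl
  | tail _ hstep ih =>
    obtain ⟨hadj, ha, hb⟩ := hstep
    refine ih.trans (SimpleGraph.Adj.reachable ?_)
    simp [hadj, ha, hb]

/-- A common node would join `v` to `u` without the bridge `s(u, v)`. -/
lemma eq_of_inSubtree (hT : T.IsAcyclic) (hv : T.Adj u v) (hw : T.Adj u w) {x : V}
    (hxv : InSubtree T u v x) (hxw : InSubtree T u w x) : v = w := by
  by_contra hvw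
  have hwu : (T.deleteEdges {s(u, v)}).Adj w u := by
    simp [hw.symm, hw.ne', Ne.symm hvw]
  refine SimpleGraph.isAcyclic_iff_forall_adj_isBridge.mp hT hv ?_
  exact ((hxv.reachable_deleteEdges v).trans
    ((hxw.reachable_deleteEdges v).symm.trans hwu.reachable)).symm

end InSubtree

lemma exists_adj_inSubtree {T : SimpleGraph V} (hT : T.Connected) {u x : V} (hx : x ≠ u) :
    ∃ v, T.Adj u v ∧ InSubtree T u v x := by
  have h := (SimpleGraph.reachable_iff_reflTransGen x u).mp (hT.preconnected x u)
  induction h using ReflTransGen.head_induction_on with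
  | refl => exact absurd rfl hx
  | @head x y hxy _ ih =>
    by_cases hy : y = u
    · exact ⟨x, hy ▸ hxy.symm, .refl⟩
    · obtain ⟨v, hv, hyv⟩ := ih hy
      exact ⟨v, hv, hyv.tail hxy.symm hy hx⟩

section Tree

variable [Fintype V] [DecidableEq V] {T : SimpleGraph V} [DecidableRel T.Adj] {u v : V}

def subtreeEdges (T : SimpleGraph V) [DecidableRel T.Adj] (u v : V) : Finset (V × V) :=
  (treeEdges T).filter fun e => InSubtree T u v e.1 ∧ InSubtree T u v e.2

/-- In a tree, the edges of `G_{v\u}` together with `(u, v)` and `(v, u)`. -/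
def branchEdges (T : SimpleGraph V) [DecidableRel T.Adj] (u v : V) : Finset (V × V) :=
  (treeEdges T).filter fun e =>
    (e.1 ≠ u → InSubtree T u v e.1) ∧ (e.2 ≠ u → InSubtree T u v e.2)

lemma mem_treeEdges {a b : V} : (a, b) ∈ treeEdges T ↔ T.Adj a b := by
  simp [treeEdges]

lemma subtreeEdges_subset_branchEdges : subtreeEdges T u v ⊆ branchEdges T u v :=
  fun _ he => by
    simp only [subtreeEdges, branchEdges, mem_filter] at he ⊢
    exact ⟨he.1, fun _ => he.2.1, fun _ => he.2.2⟩

lemma mem_branchEdges_of_adj (huv : T.Adj u v) : (v, u) ∈ branchEdges T u v := by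
  simp [branchEdges, mem_treeEdges.mpr huv.symm, InSubtree.refl]

lemma notMem_subtreeEdges_of_adj (huv : T.Adj u v) : (v, u) ∉ subtreeEdges T u v := by
  simp only [subtreeEdges, mem_filter, not_and]
  exact fun _ _ hu => hu.ne huv.ne' rfl

lemma treeEdges_eq_biUnion_branchEdges (hT : T.Connected) (u : V) :
    treeEdges T = (T.neighborFinset u).biUnion (branchEdges T u) := by
  refine Subset.antisymm (fun ⟨a, c⟩ he => ?_)
    (biUnion_subset.mpr fun _ _ => filter_subset _ _)
  have hac := mem_treeEdges.mp he
  simp only [mem_biUnion, SimpleGraph.mem_neighborFinset, branchEdges, mem_filter]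
  by_cases ha : a = u
  · subst ha
    exact ⟨c, hac, he, fun h => absurd rfl h, fun _ => InSubtree.refl⟩
  · obtain ⟨v, hv, hav⟩ := exists_adj_inSubtree hT ha
    exact ⟨v, hv, he, fun _ => hav, fun hc => hav.tail hac ha hc⟩

lemma pairwiseDisjoint_branchEdges (hT : T.IsAcyclic) (u : V) :
    (T.neighborFinset u : Set V).PairwiseDisjoint (branchEdges T u) := by
  intro v hv w hw hvw
  simp only [mem_coe, SimpleGraph.mem_neighborFinset] at hv hw
  refine disjoint_left.mpr fun ⟨a, c⟩ hev hew => hvw ?_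
  simp only [branchEdges, mem_filter] at hev hew
  have hac := mem_treeEdges.mp hev.1
  by_cases ha : a = u
  · have hc : c ≠ u := ha ▸ hac.ne'
    exact InSubtree.eq_of_inSubtree hT hv hw (hev.2.2 hc) (hew.2.2 hc)
  · exact InSubtree.eq_of_inSubtree hT hv hw (hev.2.1 ha) (hew.2.1 ha)

lemma reflTransGen_inter_subtreeEdges {L : Finset (V × V)} (hL : L ⊆ treeEdges T)
    (hvu : v ≠ u) (hu : ∀ c, (u, c) ∈ L → ¬ InSubtree T u v c) {s : V}
    (h : ReflTransGen (fun a c => (a, c) ∈ L) s v) :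
    InSubtree T u v s ∧
      ReflTransGen (fun a c => (a, c) ∈ L ∩ subtreeEdges T u v) s v := by
  induction h using ReflTransGen.head_induction_on with
  | refl => exact ⟨InSubtree.refl, .refl⟩
  | @head a c hac _ ih =>
    obtain ⟨hc, hcv⟩ := ih
    have hadj := mem_treeEdges.mp (hL hac)
    have ha : a ≠ u := by
      rintro rfl
      exact hu c hac hc
    have ha' : InSubtree T u v a := hc.tail hadj.symm (hc.ne hvu) ha
    exact ⟨ha', hcv.head (mem_inter.mpr ⟨hac, mem_filter.mpr ⟨hL hac, ha', hc⟩⟩)⟩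

lemma reaches_iff_reaches_inter_subtreeEdges {L : Finset (V × V)} (hL : L ⊆ treeEdges T)
    (hvu : v ≠ u) (hu : ∀ c, (u, c) ∈ L → ¬ InSubtree T u v c) (S : Finset V) :
    Reaches L S v ↔ Reaches (L ∩ subtreeEdges T u v) S v := by
  refine ⟨fun ⟨s, hs, h⟩ => ⟨s, hs, (reflTransGen_inter_subtreeEdges hL hvu hu h).2⟩,
    fun ⟨s, hs, h⟩ => ⟨s, hs, ReflTransGen.mono (fun _ _ => mem_of_mem_inter_left) _ _ h⟩⟩

lemma reaches_iff_exists_neighbor {L : Finset (V × V)} (hL : L ⊆ treeEdges T) {S : Finset V}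
    (hu : u ∉ S) :
    Reaches L S u ↔
      ∃ v ∈ T.neighborFinset u, (v, u) ∈ L ∧ Reaches (L ∩ subtreeEdges T u v) S v := by
  constructor
  · rintro ⟨s, hs, h⟩
    obtain ⟨v, hsv, hvu⟩ := exists_reflTransGen_avoiding_of_ne h (ne_of_mem_of_not_mem hs hu)
    have hadj := mem_treeEdges.mp (hL hvu)
    have hL' : L.filter (·.1 ≠ u) ⊆ treeEdges T := (filter_subset _ _).trans hL
    have hu' : ∀ c, (u, c) ∈ L.filter (·.1 ≠ u) → ¬ InSubtree T u v c := by simp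
    have hsv' : ReflTransGen (fun a c => (a, c) ∈ L.filter (·.1 ≠ u)) s v :=
      ReflTransGen.mono (fun _ _ => mem_filter.mpr) _ _ hsv
    have hinter : L.filter (·.1 ≠ u) ∩ subtreeEdges T u v ⊆ L ∩ subtreeEdges T u v :=
      inter_subset_inter_right (filter_subset _ _)
    refine ⟨v, (T.mem_neighborFinset u v).mpr hadj.symm, hvu, s, hs, ?_⟩
    exact ReflTransGen.mono (fun _ _ h => hinter h) _ _
      (reflTransGen_inter_subtreeEdges hL' hadj.ne hu' hsv').2
  · rintro ⟨v, -, hvu, s, hs, h⟩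
    exact ⟨s, hs, (ReflTransGen.mono (fun _ _ => mem_of_mem_inter_left) _ _ h).tail hvu⟩

lemma apSub_eq_liveExpect (hT : T.IsAcyclic) (huv : T.Adj u v) (q : V × V → ℝ)
    (S : Finset V) :
    apSub (treeEdges T) q S v u
      = liveExpect (subtreeEdges T u v) q (fun L => if Reaches L S v then 1 else 0) := by
  have hsub : subtreeEdges T u v ⊆ treeEdges T \ {(u, v), (v, u)} := fun e he => by
    simp only [subtreeEdges, mem_filter] at he
    have h1 := he.2.1.ne huv.ne'
    have h2 := he.2.2.ne huv.ne'
    simp only [mem_sdiff, mem_insert, mem_singleton]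
    exact ⟨he.1, by rintro (rfl | rfl) <;> simp_all⟩
  refine (liveExpect_congr q fun L hL => ?_).trans (liveExpect_comp_inter q hsub _)
  have hu : ∀ c, (u, c) ∈ L → ¬ InSubtree T u v c := fun c huc hc => by
    have huc' := mem_sdiff.mp (hL huc)
    have hvc := InSubtree.eq_of_inSubtree hT huv (mem_treeEdges.mp huc'.1) hc InSubtree.refl
    exact huc'.2 (by simp [hvc])
  rw [reaches_iff_reaches_inter_subtreeEdges (hL.trans sdiff_subset) huv.ne' hu]

lemma liveExpect_branchEdges (hT : T.IsAcyclic) (huv : T.Adj u v) (q : V × V → ℝ)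
    (S : Finset V) :
    liveExpect (branchEdges T u v) q
        (fun M => if (v, u) ∈ M ∧ Reaches (M ∩ subtreeEdges T u v) S v then 1 else 0)
      = q (v, u) * apSub (treeEdges T) q S v u := by
  rw [apSub_eq_liveExpect hT huv, ← liveExpect_singleton q (v, u),
    ← liveExpect_mul_of_disjoint q (singleton_subset_iff.mpr (mem_branchEdges_of_adj huv))
      subtreeEdges_subset_branchEdges
      (disjoint_singleton_left.mpr (notMem_subtreeEdges_of_adj huv))]
  simp only [mem_inter, mem_singleton, and_true, ite_and, ite_mul, one_mul, zero_mul]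

end Tree

theorem ap_eq_prod_neighbors_general [Fintype V] [DecidableEq V]
    (T : SimpleGraph V) [DecidableRel T.Adj] (hT : T.IsTree)
    (p p' : V × V → ℝ)
    (S B : Finset V) (u : V) (hu : u ∉ S) :
    ap (treeEdges T) (pB p p' B) S u =
      1 - ∏ v ∈ T.neighborFinset u,
        (1 - apSub (treeEdges T) (pB p p' B) S v u * pB p p' B (v, u)) := by
  set q := pB p p' B
  let viaNeighbor (v : V) (M : Finset (V × V)) : ℝ :=
    if (v, u) ∈ M ∧ Reaches (M ∩ subtreeEdges T u v) S v then 1 else 0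
  have hindicator : ∀ L ⊆ treeEdges T, (if Reaches L S u then 1 else 0)
      = 1 - ∏ v ∈ T.neighborFinset u, (1 - viaNeighbor v (L ∩ branchEdges T u v)) := by
    intro L hL
    rw [if_congr (reaches_iff_exists_neighbor hL hu) rfl rfl, ite_exists_eq_one_sub_prod]
    refine congrArg _ (prod_congr rfl fun v hv => ?_)
    have hvu := mem_branchEdges_of_adj ((T.mem_neighborFinset u v).mp hv)
    simp only [viaNeighbor, mem_inter, hvu, and_true, inter_assoc,
      inter_eq_right.mpr subtreeEdges_subset_branchEdges]
  calc ap (treeEdges T) q S u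
      = liveExpect (treeEdges T) q
          (fun L => 1 - ∏ v ∈ T.neighborFinset u,
            (1 - viaNeighbor v (L ∩ branchEdges T u v))) :=
        liveExpect_congr q hindicator
    _ = 1 - ∏ v ∈ T.neighborFinset u,
          (1 - liveExpect (branchEdges T u v) q (viaNeighbor v)) := by
        rw [liveExpect_one_sub, treeEdges_eq_biUnion_branchEdges hT.connected u,
          liveExpect_prod_biUnion q (pairwiseDisjoint_branchEdges hT.isAcyclic u)
            fun v M => 1 - viaNeighbor v M]
        simp_rw [liveExpect_one_sub]
    _ = _ := by
        refine congrArg _ (prod_congr rfl fun v hv => ?_)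
        rw [liveExpect_branchEdges hT.isAcyclic ((T.mem_neighborFinset u v).mp hv), mul_comm]

/-- On a bidirected tree with seed set `S` and boost set `B`, for every non-seed
node `u`: `ap_B(u) = 1 − ∏_{v ∈ N(u)} (1 − ap_B(v\u) · p^B_{vu})`. -/
theorem ap_eq_prod_neighbors [Fintype V] [DecidableEq V]
    (T : SimpleGraph V) [DecidableRel T.Adj] (hT : T.IsTree)
    (p p' : V × V → ℝ)
    (hp0 : ∀ e, 0 ≤ p e) (hpp' : ∀ e, p e ≤ p' e) (hp'1 : ∀ e, p' e ≤ 1)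
    (S B : Finset V) (u : V) (hu : u ∉ S) :
    ap (treeEdges T) (pB p p' B) S u =
      1 - ∏ v ∈ T.neighborFinset u,
        (1 - apSub (treeEdges T) (pB p p' B) S v u * pB p p' B (v, u)) :=
  ap_eq_prod_neighbors_general T hT p p' S B u hu
end
end
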